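/- Let S be the power set of {1,...,n} with n ≥ 2, a_{ij} = {i,j} for i < j, and t_{ij} = {i} ∪ {j, j+1, ..., n}. Then for each fixed i, the interval [{i}, {i,...,n}] is the disjoint union of the intervals [a_{ij}, t_{ij}] for j = i+1,...,f_i and [{i}, t_{i(f_i+1)}], for any choice i+1 ≤ f_i ≤ n, where t_{i(n+1)} = {i}. -/
import Mathlib


def latInterval (a b : Finset ℕ) : Set (Finset ℕ) := {s | a ⊆ s ∧ s ⊆ b}

lemma disj_aux (n i j k : ℕ) (hij : i < j) (hjk : j < k) :
    Disjoint (latInterval {i, j} (insert i (Finset.Icc j n)))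
      (latInterval {i, k} (insert i (Finset.Icc k n))) := by
  rw [Set.disjoint_left]
  rintro s ⟨hs1, _⟩ ⟨_, hs4⟩
  have hj : j ∈ s := hs1 (by simp)
  have := hs4 hj
  simp only [Finset.mem_insert, Finset.mem_Icc] at this
  omega

/-- For fixed i, the interval [{i}, {i,...,n}] is the disjoint union of the
intervals [{i,j}, {i} ∪ {j,...,n}] for j = i+1,...,fᵢ and [{i}, {i} ∪ {fᵢ+1,...,n}],
for any choice i+1 ≤ fᵢ ≤ n. -/
theorem stmt_9 (n i fi : ℕ) (h1 : 1 ≤ i) (h2 : i + 1 ≤ fi) (h3 : fi ≤ n) :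
    (latInterval {i} (Finset.Icc i n) =
      (⋃ j ∈ Finset.Icc (i + 1) fi,
        latInterval {i, j} (insert i (Finset.Icc j n))) ∪
      latInterval {i} (insert i (Finset.Icc (fi + 1) n))) ∧
    (∀ j ∈ Finset.Icc (i + 1) fi, ∀ k ∈ Finset.Icc (i + 1) fi, j ≠ k →
      Disjoint (latInterval {i, j} (insert i (Finset.Icc j n)))
        (latInterval {i, k} (insert i (Finset.Icc k n)))) ∧
    (∀ j ∈ Finset.Icc (i + 1) fi,
      Disjoint (latInterval {i, j} (insert i (Finset.Icc j n)))
        (latInterval {i} (insert i (Finset.Icc (fi + 1) n)))) := by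
  refine ⟨?_, ?_, ?_⟩
  · ext s
    simp only [Set.mem_union, Set.mem_iUnion, latInterval, Set.mem_setOf_eq,
      Finset.mem_Icc, exists_prop]
    constructor
    · rintro ⟨hi, hsub⟩
      have hi' : i ∈ s := hi (by simp)
      by_cases hT : (s ∩ Finset.Icc (i + 1) fi).Nonempty
      · left
        set j := (s ∩ Finset.Icc (i + 1) fi).min' hT with hjdef
        have hjmem := (s ∩ Finset.Icc (i + 1) fi).min'_mem hT
        simp only [Finset.mem_inter, Finset.mem_Icc] at hjmem
        refine ⟨j, ⟨hjmem.2.1, hjmem.2.2⟩, ?_, ?_⟩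
        · intro x hx
          simp only [Finset.mem_insert, Finset.mem_singleton] at hx
          rcases hx with rfl | rfl
          · exact hi'
          · exact hjmem.1
        · intro x hx
          simp only [Finset.mem_insert, Finset.mem_Icc]
          have hxn := hsub hx
          simp only [Finset.mem_Icc] at hxn
          by_cases hxi : x = i
          · left; exact hxi
          · right
            refine ⟨?_, hxn.2⟩
            by_contra hlt
            push_neg at hlt
            have hxmem : x ∈ s ∩ Finset.Icc (i + 1) fi := by
              simp only [Finset.mem_inter, Finset.mem_Icc]
              exact ⟨hx, by omega, by omega⟩
            have := (s ∩ Finset.Icc (i + 1) fi).min'_le x hxmem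
            omega
      · right
        refine ⟨hi, ?_⟩
        intro x hx
        simp only [Finset.mem_insert, Finset.mem_Icc]
        have hxn := hsub hx
        simp only [Finset.mem_Icc] at hxn
        by_cases hxi : x = i
        · left; exact hxi
        · right
          refine ⟨?_, hxn.2⟩
          by_contra hlt
          push_neg at hlt
          exact hT ⟨x, by simp only [Finset.mem_inter, Finset.mem_Icc]; exact ⟨hx, by omega, by omega⟩⟩
    · rintro (⟨j, ⟨hj1, hj2⟩, hs1, hs2⟩ | ⟨hs1, hs2⟩)
      · refine ⟨?_, ?_⟩
        · intro x hx
          simp only [Finset.mem_singleton] at hx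
          subst hx
          exact hs1 (by simp)
        · intro x hx
          have := hs2 hx
          simp only [Finset.mem_insert, Finset.mem_Icc] at this ⊢
          omega
      · refine ⟨hs1, ?_⟩
        intro x hx
        have := hs2 hx
        simp only [Finset.mem_insert, Finset.mem_Icc] at this ⊢
        omega
  · intro j hj k hk hne
    simp only [Finset.mem_Icc] at hj hk
    rcases lt_or_gt_of_ne hne with h | h
    · exact disj_aux n i j k (by omega) h
    · exact (disj_aux n i k j (by omega) h).symm
  · intro j hj
    simp only [Finset.mem_Icc] at hj
    rw [Set.disjoint_left]
    rintro s ⟨hs1, _⟩ ⟨_, hs4⟩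
    have hjmem : j ∈ s := hs1 (by simp)
    have := hs4 hjmem
    simp only [Finset.mem_insert, Finset.mem_Icc] at this
    omega
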